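/- With the same setting, ‖∫_0^t (u^d(τ) − u*(τ)) dτ‖_∞ ≤ max_j (sup_{τ ∈ I_k̂} u*_j(τ) − inf_{τ ∈ I_k̂} u*_j(τ)) · Δt for any t ∈ [0, t_f], where I_k̂ = [(k̂−1)Δt, k̂Δt] is the interval containing t. In particular, since ∫_0^{(k̂−1)Δt} u^d = ∫_0^{(k̂−1)Δt} u*, the cumulative difference is controlled by the oscillation of u* on a single subinterval times Δt. -/

import Mathlib

open MeasureTheory intervalIntegral

/-! On every completed cell `[iΔt, (i+1)Δt]` the average `u^d` has the same integral as `u*`,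
so `∫₀ᵗ (u^d - u*)` reduces to the integral over the part of the current cell before `t`.
There `u^d` is the average of `u*` over that cell, hence lies between the infimum and the
supremum of `u*` on it, as does `u*` itself; the integrand is therefore bounded by the
oscillation, over a stretch of length at most `Δt`. -/

open Set

section Cell

variable {f g : ℝ → ℝ} {a b c m M t : ℝ}

theorem intervalIntegrable_of_eqOn_Ioo_const (hab : a ≤ b) (hg : EqOn g (fun _ => c) (Ioo a b)) :
    IntervalIntegrable g volume a b :=
  intervalIntegrable_const.congr_uIoo (by rw [uIoo_of_le hab]; exact hg.symm)

theorem integral_of_eqOn_Ioo_const (hab : a ≤ b) (hg : EqOn g (fun _ => c) (Ioo a b)) :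
    ∫ x in a..b, g x = (b - a) * c := by
  rw [integral_congr_Ioo_of_le hab hg, intervalIntegral.integral_const, smul_eq_mul]

theorem integral_sub_eq_zero_of_eqOn_Ioo_average (hab : a < b)
    (hf : IntervalIntegrable f volume a b)
    (hg : EqOn g (fun _ => (b - a)⁻¹ * ∫ x in a..b, f x) (Ioo a b)) :
    ∫ x in a..b, (g x - f x) = 0 := by
  rw [integral_sub (intervalIntegrable_of_eqOn_Ioo_const hab.le hg) hf,
    integral_of_eqOn_Ioo_const hab.le hg, mul_inv_cancel_left₀ (sub_pos.2 hab).ne', sub_self]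

theorem inv_mul_integral_mem_Icc_of_mapsTo (hab : a < b) (hf : IntervalIntegrable f volume a b)
    (hfmM : MapsTo f (Icc a b) (Icc m M)) :
    (b - a)⁻¹ * ∫ x in a..b, f x ∈ Icc m M := by
  have hlen : 0 < b - a := sub_pos.2 hab
  have hlower : m * (b - a) ≤ ∫ x in a..b, f x := by
    simpa [mul_comm] using
      integral_mono_on hab.le intervalIntegrable_const hf fun x hx => (hfmM hx).1
  have hupper : ∫ x in a..b, f x ≤ M * (b - a) := by
    simpa [mul_comm] using
      integral_mono_on hab.le hf intervalIntegrable_const fun x hx => (hfmM hx).2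
  rw [inv_mul_eq_div]
  exact ⟨(le_div_iff₀ hlen).2 hlower, (div_le_iff₀ hlen).2 hupper⟩

theorem abs_integral_sub_le_of_eqOn_Ico (hat : a ≤ t) (htb : t < b)
    (hg : EqOn g (fun _ => c) (Ico a b)) (hc : c ∈ Icc m M)
    (hfmM : MapsTo f (Icc a b) (Icc m M)) :
    |∫ x in a..t, (g x - f x)| ≤ (M - m) * (t - a) := by
  have hbound : ∀ x ∈ uIoc a t, ‖g x - f x‖ ≤ M - m := by
    intro x hx
    rw [uIoc_of_le hat] at hx
    rw [hg ⟨hx.1.le, hx.2.trans_lt htb⟩]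
    exact Real.dist_le_of_mem_Icc hc (hfmM ⟨hx.1.le, hx.2.trans htb.le⟩)
  simpa [abs_of_nonneg (sub_nonneg.2 hat)] using norm_integral_le_of_norm_le_const hbound

end Cell

theorem mapsTo_Icc_csInf_csSup_image {s : Set ℝ} {f : ℝ → ℝ}
    (hA : BddAbove (f '' s)) (hB : BddBelow (f '' s)) :
    MapsTo f s (Icc (sInf (f '' s)) (sSup (f '' s))) := fun _ hx =>
  ⟨csInf_le hB (mem_image_of_mem f hx), le_csSup hA (mem_image_of_mem f hx)⟩

section Partition

variable {f g : ℝ → ℝ} {p : ℕ → ℝ}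

theorem integral_sub_eq_zero_of_eqOn_cell_averages (hp : StrictMono p) {n : ℕ}
    (hf : ∀ i < n, IntervalIntegrable f volume (p i) (p (i + 1)))
    (hg : ∀ i < n, EqOn g (fun _ => (p (i + 1) - p i)⁻¹ * ∫ x in p i..p (i + 1), f x)
      (Ioo (p i) (p (i + 1)))) :
    IntervalIntegrable (fun x => g x - f x) volume (p 0) (p n) ∧
      ∫ x in p 0..p n, (g x - f x) = 0 := by
  have hcell (i : ℕ) (hi : i < n) :
      IntervalIntegrable (fun x => g x - f x) volume (p i) (p (i + 1)) :=
    (intervalIntegrable_of_eqOn_Ioo_const (hp i.lt_succ_self).le (hg i hi)).sub (hf i hi)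
  refine ⟨IntervalIntegrable.trans_iterate hcell, ?_⟩
  rw [← sum_integral_adjacent_intervals hcell]
  exact Finset.sum_eq_zero fun i hi => integral_sub_eq_zero_of_eqOn_Ioo_average
    (hp i.lt_succ_self) (hf i (Finset.mem_range.mp hi)) (hg i (Finset.mem_range.mp hi))

theorem abs_integral_sub_cell_averages_le (hp : StrictMono p) {k : ℕ} {t : ℝ}
    (hf : ∀ i ≤ k, IntervalIntegrable f volume (p i) (p (i + 1)))
    (hA : BddAbove (f '' Icc (p k) (p (k + 1)))) (hB : BddBelow (f '' Icc (p k) (p (k + 1))))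
    (hg : ∀ i ≤ k, EqOn g (fun _ => (p (i + 1) - p i)⁻¹ * ∫ x in p i..p (i + 1), f x)
      (Ico (p i) (p (i + 1))))
    (ht : t ∈ Ico (p k) (p (k + 1))) :
    |∫ x in p 0..t, (g x - f x)| ≤
      (sSup (f '' Icc (p k) (p (k + 1))) - sInf (f '' Icc (p k) (p (k + 1)))) * (t - p k) := by
  obtain ⟨hpast_ii, hpast⟩ := integral_sub_eq_zero_of_eqOn_cell_averages hp
    (fun i hi => hf i hi.le) (fun i hi => (hg i hi.le).mono Ioo_subset_Ico_self)
  have hg_cur := (hg k le_rfl).mono (Ico_subset_Ico_right ht.2.le)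
  have hcur_ii : IntervalIntegrable (fun x => g x - f x) volume (p k) t :=
    (intervalIntegrable_of_eqOn_Ioo_const ht.1 (hg_cur.mono Ioo_subset_Ico_self)).sub
      ((hf k le_rfl).mono_set (uIcc_subset_uIcc_left (Icc_subset_uIcc ⟨ht.1, ht.2.le⟩)))
  have hfmM := mapsTo_Icc_csInf_csSup_image hA hB
  calc |∫ x in p 0..t, (g x - f x)|
      = |∫ x in p k..t, (g x - f x)| := by
        rw [← integral_add_adjacent_intervals hpast_ii hcur_ii, hpast, zero_add]
    _ ≤ _ := abs_integral_sub_le_of_eqOn_Ico ht.1 ht.2 (hg k le_rfl)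
        (inv_mul_integral_mem_Icc_of_mapsTo (hp k.lt_succ_self) (hf k le_rfl) hfmM) hfmM

end Partition

theorem abs_integral_sub_average_le_oscillation_mul {f g : ℝ → ℝ} {δ t : ℝ} {k : ℕ}
    (hf : IntervalIntegrable f volume 0 (((k : ℝ) + 1) * δ))
    (hA : BddAbove (f '' Icc ((k : ℝ) * δ) (((k : ℝ) + 1) * δ)))
    (hB : BddBelow (f '' Icc ((k : ℝ) * δ) (((k : ℝ) + 1) * δ)))
    (hg : ∀ i ≤ k, ∀ x ∈ Ico ((i : ℝ) * δ) (((i : ℝ) + 1) * δ),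
      g x = (1 / δ) * ∫ τ in ((i : ℝ) * δ)..(((i : ℝ) + 1) * δ), f τ)
    (ht : t ∈ Ico ((k : ℝ) * δ) (((k : ℝ) + 1) * δ)) :
    |∫ τ in (0 : ℝ)..t, (g τ - f τ)| ≤
      (sSup (f '' Icc ((k : ℝ) * δ) (((k : ℝ) + 1) * δ)) -
        sInf (f '' Icc ((k : ℝ) * δ) (((k : ℝ) + 1) * δ))) * δ := by
  have hδ : 0 < δ := by nlinarith [ht.1.trans_lt ht.2]
  set p : ℕ → ℝ := fun i => (i : ℝ) * δ with hp
  have hp_succ (i : ℕ) : p (i + 1) = ((i : ℝ) + 1) * δ := by simp [hp]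
  have hp_strictMono : StrictMono p := fun i j hij => by
    simp only [hp]; gcongr
  have hp_le (i : ℕ) (hi : i ≤ k + 1) : p i ∈ uIcc 0 (((k : ℝ) + 1) * δ) :=
    Icc_subset_uIcc ⟨by positivity, hp_succ k ▸ hp_strictMono.monotone hi⟩
  have hbound := abs_integral_sub_cell_averages_le hp_strictMono
    (fun i hi => hf.mono_set (uIcc_subset_uIcc (hp_le i (by omega)) (hp_le (i + 1) (by omega))))
    (hp_succ k ▸ hA) (hp_succ k ▸ hB)
    (fun i hi x hx => by
      rw [hp_succ, show ((i : ℝ) + 1) * δ - i * δ = δ by ring, ← one_div]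
      exact hg i hi x (hp_succ i ▸ hx))
    (hp_succ k ▸ ht)
  rw [hp_succ, show p 0 = 0 by simp [hp]] at hbound
  refine hbound.trans (mul_le_mul_of_nonneg_left (by linarith [ht.2]) ?_)
  exact sub_nonneg.2 <| csInf_le_csSup ((nonempty_Icc.2 (by linarith)).image f) hB hA

theorem piecewise_average_cumulative_diff_le_oscillation_general
    (N T : ℕ) (hN : 0 < N) (tf : ℝ)
    (Δt : ℝ) (hΔt : Δt = tf / T)
    (ustar ud : ℝ → Fin N → ℝ)
    (hbound : ∀ t ∈ Set.Icc (0 : ℝ) tf, ∀ j, ustar t j ∈ Set.Icc (0 : ℝ) 1)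
    (hint : ∀ j, IntervalIntegrable (fun τ => ustar τ j) volume 0 tf)
    (hud : ∀ k : ℕ, k < T →
      ∀ t ∈ Set.Ico ((k : ℝ) * Δt) (((k : ℝ) + 1) * Δt), ∀ j,
        ud t j = (1 / Δt) * ∫ τ in ((k : ℝ) * Δt)..(((k : ℝ) + 1) * Δt), ustar τ j) :
    ∀ t ∈ Set.Icc (0 : ℝ) tf, ∀ khat : ℕ, khat < T →
      t ∈ Set.Ico ((khat : ℝ) * Δt) (((khat : ℝ) + 1) * Δt) →
      ∀ j, |∫ τ in (0 : ℝ)..t, (ud τ j - ustar τ j)| ≤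
        (Finset.univ.sup' (Finset.univ_nonempty_iff.mpr ⟨⟨0, hN⟩⟩)
          (fun j' : Fin N =>
            sSup ((fun τ => ustar τ j') ''
              Set.Icc ((khat : ℝ) * Δt) (((khat : ℝ) + 1) * Δt)) -
            sInf ((fun τ => ustar τ j') ''
              Set.Icc ((khat : ℝ) * Δt) (((khat : ℝ) + 1) * Δt)))) * Δt := by
  intro t _ khat hkT htk j
  have hΔpos : 0 < Δt := by nlinarith [htk.1.trans_lt htk.2]
  have htf : tf = T * Δt := by
    rw [hΔt, mul_div_cancel₀ _ (by exact_mod_cast (Nat.zero_lt_of_lt hkT).ne')]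
  have hcell_le : ((khat : ℝ) + 1) * Δt ≤ tf := by
    rw [htf]; gcongr; exact_mod_cast hkT
  have hcell : Icc ((khat : ℝ) * Δt) (((khat : ℝ) + 1) * Δt) ⊆ Icc 0 tf :=
    Icc_subset_Icc (by positivity) hcell_le
  have hrange :
      (fun τ => ustar τ j) '' Icc ((khat : ℝ) * Δt) (((khat : ℝ) + 1) * Δt) ⊆ Icc 0 1 :=
    image_subset_iff.2 fun τ hτ => hbound τ (hcell hτ) j
  refine (abs_integral_sub_average_le_oscillation_mul
    ((hint j).mono_set (uIcc_subset_uIcc_left (Icc_subset_uIcc ⟨by positivity, hcell_le⟩)))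
    (bddAbove_Icc.mono hrange) (bddBelow_Icc.mono hrange)
    (fun i hi x hx => hud i (by omega) x hx j) htk).trans ?_
  gcongr
  exact (Finset.le_sup'_iff _).2 ⟨j, Finset.mem_univ j, le_rfl⟩

/-- The cumulative difference between `u*` and its piecewise interval-average `u^d`
is bounded by the largest componentwise oscillation of `u*` on the subinterval
containing `t`, times `Δt`. -/
theorem piecewise_average_cumulative_diff_le_oscillation
    (N T : ℕ) (hN : 0 < N) (hT : 0 < T) (tf : ℝ) (htf : 0 < tf)
    (Δt : ℝ) (hΔt : Δt = tf / T)
    (ustar ud : ℝ → Fin N → ℝ)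
    (hbound : ∀ t ∈ Set.Icc (0 : ℝ) tf, ∀ j, ustar t j ∈ Set.Icc (0 : ℝ) 1)
    (hint : ∀ j, IntervalIntegrable (fun τ => ustar τ j) volume 0 tf)
    (hud : ∀ k : ℕ, k < T →
      ∀ t ∈ Set.Ico ((k : ℝ) * Δt) (((k : ℝ) + 1) * Δt), ∀ j,
        ud t j = (1 / Δt) * ∫ τ in ((k : ℝ) * Δt)..(((k : ℝ) + 1) * Δt), ustar τ j) :
    ∀ t ∈ Set.Icc (0 : ℝ) tf, ∀ khat : ℕ, khat < T →
      t ∈ Set.Ico ((khat : ℝ) * Δt) (((khat : ℝ) + 1) * Δt) →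
      ∀ j, |∫ τ in (0 : ℝ)..t, (ud τ j - ustar τ j)| ≤
        (Finset.univ.sup' (Finset.univ_nonempty_iff.mpr ⟨⟨0, hN⟩⟩)
          (fun j' : Fin N =>
            sSup ((fun τ => ustar τ j') ''
              Set.Icc ((khat : ℝ) * Δt) (((khat : ℝ) + 1) * Δt)) -
            sInf ((fun τ => ustar τ j') ''
              Set.Icc ((khat : ℝ) * Δt) (((khat : ℝ) + 1) * Δt)))) * Δt :=
  piecewise_average_cumulative_diff_le_oscillation_general N T hN tf Δt hΔt ustar ud hbound hint hud
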